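/- arXiv:0805.3758 — 4 statements merged into one kernel-verified Lean document; each statement's English description precedes it below -/
import Mathlib

section
/- The only non-Abelian two-dimensional nilpotent complex Jordan algebra, up to isomorphism, is the one defined on a basis {e₁, e₂} by the single nonzero product φ(e₁,e₁) = e₂. -/
/-- Bilinearity of a plain product. -/
def IsBilin (K : Type*) [Field K] {V : Type*} [AddCommGroup V] [Module K V]
    (φ : V → V → V) : Prop :=
  (∀ (a : K) (x y z : V), φ (a • x + y) z = a • φ x z + φ y z) ∧
  (∀ (a : K) (x y z : V), φ x (a • y + z) = a • φ x y + φ x z)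

/-- Commutativity (symmetry) of the product. -/
def IsComm {V : Type*} (φ : V → V → V) : Prop := ∀ x y, φ x y = φ y x

/-- The Jordan identity. -/
def JordanId {V : Type*} (φ : V → V → V) : Prop :=
  ∀ x y, φ (φ x x) (φ x y) = φ x (φ (φ x x) y)

/-- Lower central series: `lcs K φ 0 = C¹ = V`, and `lcs K φ m` is the term `C^{m+1}`. -/
def lcs (K : Type*) [Field K] {V : Type*} [AddCommGroup V] [Module K V]
    (φ : V → V → V) : ℕ → Submodule K V
  | 0 => ⊤
  | m + 1 => Submodule.span K {z | ∃ x ∈ lcs K φ m, ∃ y, z = φ x y}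

/-- Nilpotency: some term of the lower central series vanishes. -/
def IsNilp (K : Type*) [Field K] {V : Type*} [AddCommGroup V] [Module K V]
    (φ : V → V → V) : Prop := ∃ k, lcs K φ k = ⊥

/-!
A nilpotent algebra of dimension `n` has a strictly decreasing lower central series, so
`C^{n+1} = 0`; in dimension two every triple product `(xy)z` therefore vanishes. A commutative
product that is not identically zero has, by polarization, a vector `x` with `x² ≠ 0`, and then
`x, x²` are linearly independent, because `x = a x²` would give `x² = a x²x = 0`. In the basis
`e₀ = x, e₁ = x²` all products other than `e₀e₀ = e₁` are triple products.
-/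

namespace IsBilin

variable {K : Type*} [Field K] {V : Type*} [AddCommGroup V] [Module K V] {φ : V → V → V}

lemma add_left (h : IsBilin K φ) (x y z : V) : φ (x + y) z = φ x z + φ y z := by
  simpa using h.1 1 x y z

lemma add_right (h : IsBilin K φ) (x y z : V) : φ x (y + z) = φ x y + φ x z := by
  simpa using h.2 1 x y z

lemma zero_left (h : IsBilin K φ) (z : V) : φ 0 z = 0 := by
  simpa using h.add_left 0 0 z

lemma smul_left (h : IsBilin K φ) (a : K) (x z : V) : φ (a • x) z = a • φ x z := by
  simpa [h.zero_left] using h.1 a x 0 z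

lemma exists_self_ne_zero [NeZero (2 : K)] (h : IsBilin K φ) (hcomm : IsComm φ)
    (hne : ∃ x y, φ x y ≠ 0) : ∃ x, φ x x ≠ 0 := by
  obtain ⟨u, v, huv⟩ := hne
  by_contra! hsq
  have hpolar : φ (u + v) (u + v) = φ u u + (2 : K) • φ u v + φ v v := by
    rw [h.add_left, h.add_right, h.add_right, hcomm v u, two_smul]
    abel
  rw [hsq, hsq, hsq, zero_add, add_zero, eq_comm, smul_eq_zero] at hpolar
  exact huv (hpolar.resolve_left two_ne_zero)

lemma linearIndependent_self_sq (h : IsBilin K φ) (htriple : ∀ x y z, φ (φ x y) z = 0)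
    {x : V} (hx : φ x x ≠ 0) : LinearIndependent K ![x, φ x x] := by
  rw [linearIndependent_fin2]
  refine ⟨by simpa using hx, fun a hax => hx ?_⟩
  simp only [Matrix.cons_val_one, Matrix.cons_val_zero] at hax
  rw [← hax, h.smul_left, htriple, smul_zero]

end IsBilin

section LowerCentralSeries

variable (K : Type*) [Field K] {V : Type*} [AddCommGroup V] [Module K V] (φ : V → V → V)

lemma mul_mem_lcs_succ {m : ℕ} {x : V} (hx : x ∈ lcs K φ m) (y : V) :
    φ x y ∈ lcs K φ (m + 1) :=
  Submodule.subset_span ⟨x, hx, y, rfl⟩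

lemma lcs_succ_le : ∀ m, lcs K φ (m + 1) ≤ lcs K φ m
  | 0 => le_top
  | m + 1 => Submodule.span_le.mpr fun _ ⟨_, hx, y, hz⟩ =>
      hz ▸ mul_mem_lcs_succ K φ (lcs_succ_le m hx) y

lemma lcs_antitone : Antitone (lcs K φ) :=
  antitone_nat_of_succ_le (lcs_succ_le K φ)

lemma lcs_succ_congr {m n : ℕ} (h : lcs K φ m = lcs K φ n) :
    lcs K φ (m + 1) = lcs K φ (n + 1) := by
  simp only [lcs, h]

lemma lcs_add_eq_of_succ_eq {m : ℕ} (h : lcs K φ (m + 1) = lcs K φ m) (k : ℕ) :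
    lcs K φ (m + k) = lcs K φ m := by
  induction k with
  | zero => rfl
  | succ k ih => exact (lcs_succ_congr K φ ih).trans h

variable {K φ}

lemma lcs_succ_lt_of_ne_bot (hnilp : IsNilp K φ) {m : ℕ} (hm : lcs K φ m ≠ ⊥) :
    lcs K φ (m + 1) < lcs K φ m := by
  refine (lcs_succ_le K φ m).lt_of_ne fun hstab => hm ?_
  obtain ⟨k, hk⟩ := hnilp
  rw [← lcs_add_eq_of_succ_eq K φ hstab k, eq_bot_iff, ← hk]
  exact lcs_antitone K φ (Nat.le_add_left k m)

lemma finrank_lcs_le [FiniteDimensional K V] (hnilp : IsNilp K φ) (m : ℕ) :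
    Module.finrank K (lcs K φ m) ≤ Module.finrank K V - m := by
  induction m with
  | zero => exact (finrank_top K V).le
  | succ m ih =>
    by_cases hm : lcs K φ m = ⊥
    · have hbot : lcs K φ (m + 1) = ⊥ := eq_bot_iff.mpr (hm ▸ lcs_succ_le K φ m)
      rw [hbot, finrank_bot]
      exact Nat.zero_le _
    · have := Submodule.finrank_lt_finrank_of_lt (lcs_succ_lt_of_ne_bot hnilp hm)
      omega

lemma lcs_finrank_eq_bot [FiniteDimensional K V] (hnilp : IsNilp K φ) :
    lcs K φ (Module.finrank K V) = ⊥ :=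
  Submodule.finrank_eq_zero.mp (by simpa using finrank_lcs_le hnilp (Module.finrank K V))

lemma mul_mul_eq_zero_of_lcs_two_eq_bot (h : lcs K φ 2 = ⊥) (x y z : V) :
    φ (φ x y) z = 0 := by
  have := mul_mem_lcs_succ K φ (mul_mem_lcs_succ K φ (m := 0) (Submodule.mem_top (x := x)) y) z
  rwa [h, Submodule.mem_bot] at this

end LowerCentralSeries

theorem dim_two_nilpotent_jordan_classification_general
    {V : Type*} [AddCommGroup V] [Module ℂ V] (φ : V → V → V)
    (hbil : IsBilin ℂ φ) (hcomm : IsComm φ)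
    (hnilp : IsNilp ℂ φ) (hdim : Module.finrank ℂ V = 2)
    (hnonab : ∃ x y : V, φ x y ≠ 0) :
    ∃ e : Module.Basis (Fin 2) ℂ V,
      φ (e 0) (e 0) = e 1 ∧ φ (e 0) (e 1) = 0 ∧ φ (e 1) (e 0) = 0 ∧ φ (e 1) (e 1) = 0 := by
  have : FiniteDimensional ℂ V := .of_finrank_eq_succ hdim
  have htriple : ∀ x y z, φ (φ x y) z = 0 :=
    mul_mul_eq_zero_of_lcs_two_eq_bot (hdim ▸ lcs_finrank_eq_bot hnilp)
  obtain ⟨x, hx⟩ := hbil.exists_self_ne_zero hcomm hnonab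
  let e := basisOfLinearIndependentOfCardEqFinrank (hbil.linearIndependent_self_sq htriple hx)
    (by simp [hdim])
  have he : ⇑e = ![x, φ x x] := coe_basisOfLinearIndependentOfCardEqFinrank _ _
  refine ⟨e, ?_, ?_, ?_, ?_⟩ <;>
    simp only [he, Matrix.cons_val_zero, Matrix.cons_val_one, htriple]
  rw [hcomm, htriple]

/-- up to isomorphism the only non-Abelian two-dimensional nilpotent
complex Jordan algebra is given by the single nonzero product φ(e₁,e₁) = e₂. -/
theorem dim_two_nilpotent_jordan_classification
    {V : Type*} [AddCommGroup V] [Module ℂ V] (φ : V → V → V)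
    (hbil : IsBilin ℂ φ) (hcomm : IsComm φ) (hjord : JordanId φ)
    (hnilp : IsNilp ℂ φ) (hdim : Module.finrank ℂ V = 2)
    (hnonab : ∃ x y : V, φ x y ≠ 0) :
    ∃ e : Module.Basis (Fin 2) ℂ V,
      φ (e 0) (e 0) = e 1 ∧ φ (e 0) (e 1) = 0 ∧ φ (e 1) (e 0) = 0 ∧ φ (e 1) (e 1) = 0 :=
  dim_two_nilpotent_jordan_classification_general φ hbil hcomm hnilp hdim hnonab
end

section
/- The three-dimensional complex Jordan algebra φ₃ defined by φ₃(x₁,x₁) = x₂ (all other products zero) is a contraction of φ₁ defined by φ₁(e₁,e₁)=e₂, φ₁(e₁,e₂)=e₃: under the family of invertible linear maps f_t(e₁)=t e₁, f_t(e₂)=t² e₂, f_t(e₃)=e₃, the limit as t→0 of f_t⁻¹(φ₁(f_t(x), f_t(y))) exists for all x,y and equals φ₃. -/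
/-- The product φ₁(e₁,e₁)=e₂, φ₁(e₁,e₂)=e₃ on ℂ³. -/
def ψ₁ (x y : Fin 3 → ℂ) : Fin 3 → ℂ := ![0, x 0 * y 0, x 0 * y 1 + x 1 * y 0]
/-- The product φ₃(x₁,x₁)=x₂ on ℂ³. -/
def ψ₃ (x y : Fin 3 → ℂ) : Fin 3 → ℂ := ![0, x 0 * y 0, 0]
/-- The family f_t(e₁)=t e₁, f_t(e₂)=t² e₂, f_t(e₃)=e₃. -/
def ft (t : ℂ) (x : Fin 3 → ℂ) : Fin 3 → ℂ := ![t * x 0, t ^ 2 * x 1, x 2]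
/-- The inverse family f_t⁻¹. -/
noncomputable def gt (t : ℂ) (y : Fin 3 → ℂ) : Fin 3 → ℂ := ![y 0 / t, y 1 / t ^ 2, y 2]

/-- φ₃ is a contraction of φ₁ by the family f_t. -/
theorem psi_three_contraction_of_psi_one :
    (∀ t : ℂ, t ≠ 0 → ∀ x, gt t (ft t x) = x ∧ ft t (gt t x) = x) ∧
    ∀ x y : Fin 3 → ℂ,
      Filter.Tendsto (fun t : ℂ => gt t (ψ₁ (ft t x) (ft t y)))
        (nhdsWithin 0 {(0 : ℂ)}ᶜ) (nhds (ψ₃ x y)) := by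
  constructor
  · intro t ht x
    constructor <;>
    · funext i
      fin_cases i <;>
        simp [gt, ft] <;> field_simp
  · intro x y
    have hcong : ∀ t : ℂ, t ≠ 0 →
        gt t (ψ₁ (ft t x) (ft t y)) =
          ![0, x 0 * y 0, t ^ 3 * (x 0 * y 1 + x 1 * y 0)] := by
      intro t ht
      funext i
      fin_cases i <;> simp [gt, ft, ψ₁] <;> (try field_simp) <;> ring_nf
    have hlim : Filter.Tendsto
        (fun t : ℂ => (![0, x 0 * y 0, t ^ 3 * (x 0 * y 1 + x 1 * y 0)] : Fin 3 → ℂ))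
        (nhdsWithin 0 {(0 : ℂ)}ᶜ) (nhds (ψ₃ x y)) := by
      rw [tendsto_pi_nhds]
      intro i
      fin_cases i
      · simpa [ψ₃] using (tendsto_const_nhds :
          Filter.Tendsto (fun _ : ℂ => (0:ℂ)) (nhdsWithin 0 {(0 : ℂ)}ᶜ) (nhds 0))
      · simpa [ψ₃] using (tendsto_const_nhds :
          Filter.Tendsto (fun _ : ℂ => x 0 * y 0) (nhdsWithin 0 {(0 : ℂ)}ᶜ) (nhds (x 0 * y 0)))
      · have : Filter.Tendsto (fun t : ℂ => t ^ 3 * (x 0 * y 1 + x 1 * y 0))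
            (nhdsWithin 0 {(0 : ℂ)}ᶜ) (nhds ((0:ℂ) ^ 3 * (x 0 * y 1 + x 1 * y 0))) :=
          (((continuous_pow 3).mul continuous_const).tendsto (0:ℂ)).mono_left
            nhdsWithin_le_nhds
        simpa [ψ₃] using this
    refine hlim.congr' ?_
    filter_upwards [self_mem_nhdsWithin] with t ht
    exact (hcong t ht).symm
end

section
/- Let φ be a four-dimensional nilpotent complex Jordan algebra with basis {e₁,e₂,e₃,e₄} such that φ(e₁,e₁)=e₂, φ(e₁,e₃)=e₄, φ(e₁,e₂)=φ(e₁,e₄)=0, and suppose the center is spanned by {e₄}. Then writing φ(e₂,e₃)=a e₄ and φ(e₃,e₃)=b e₂ + c e₄ with a ≠ 0, the vector x = √(1−b) e₁ + e₃ satisfies: x ∉ C²(φ), the images x·x, x·(x·x) are linearly independent, i.e., L_x has a Jordan block of size ≥ 3. -/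
/-!
Indices as in the paper: `eᵢ` is `e (i - 1)`. Since `e₄` is central and the Jordan identity at
`e₁` gives `e₂ e₂ = 0`, no product of basis vectors has an `e₃`-component; hence
`C²(φ) ⊆ span {e₂, e₄}` does not contain `x`. With `s² = 1 - b` the `e₂`-coefficient of `x x`
is `s² + b = 1`, so `x x = e₂ + (2s + c) e₄` and then `x (x x) = a e₄`, which is independent
of `x x` since `a ≠ 0`.
-/

section

variable {K V : Type*} [Field K] [AddCommGroup V] [Module K V]

theorem IsBilin.exists_linearMap₂ {φ : V → V → V} (h : IsBilin K φ) :
    ∃ B : V →ₗ[K] V →ₗ[K] V, φ = fun x y => B x y := by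
  obtain ⟨hl, hr⟩ := h
  have hladd : ∀ x y z, φ (x + y) z = φ x z + φ y z := fun x y z => by simpa using hl 1 x y z
  have hradd : ∀ x y z, φ x (y + z) = φ x y + φ x z := fun x y z => by simpa using hr 1 x y z
  have hl0 : ∀ z, φ 0 z = 0 := fun z => by simpa using hladd 0 0 z
  have hr0 : ∀ x, φ x 0 = 0 := fun x => by simpa using hradd x 0 0
  refine ⟨LinearMap.mk₂ K φ hladd (fun a x z => ?_) hradd (fun a x z => ?_), rfl⟩
  · simpa [hl0] using hl a x 0 z
  · simpa [hr0] using hr a x z 0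

theorem JordanId.sq_mul_sq_eq_zero {B : V →ₗ[K] V →ₗ[K] V} (hj : JordanId fun x y => B x y)
    (hc : IsComm fun x y => B x y) {x : V} (hx : B x (B x x) = 0) :
    B (B x x) (B x x) = 0 :=
  calc B (B x x) (B x x) = B x (B (B x x) x) := hj x x
    _ = B x (B x (B x x)) := congrArg (B x) (hc (B x x) x)
    _ = 0 := by rw [hx, map_zero]

theorem notMem_lcs_one_of_map_mul_eq_zero {φ : V → V → V} (f : V →ₗ[K] K)
    (hf : ∀ x y, f (φ x y) = 0) {x : V} (hx : f x ≠ 0) : x ∉ lcs K φ 1 := by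
  have hle : lcs K φ 1 ≤ LinearMap.ker f :=
    Submodule.span_le.2 fun _ ⟨y, _, z, hyz⟩ => hyz ▸ hf y z
  exact fun hmem => hx (hle hmem)

theorem Module.Basis.linearIndependent_add_smul_pair {ι : Type*} (e : Module.Basis ι K V)
    {i j : ι} (hij : i ≠ j) (t : K) {a : K} (ha : a ≠ 0) :
    LinearIndependent K ![e i + t • e j, a • e j] := by
  refine LinearIndependent.pair_iff.2 fun p q hpq => ?_
  have hcoord (k : ι) := congrArg (fun v => e.repr v k) hpq
  have hp : p = 0 := by simpa [Finsupp.single_apply, hij, hij.symm] using hcoord i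
  subst hp
  simpa [ha] using hcoord j

end

theorem char_seq_two_two_center_lemma_general
    {V : Type*} [AddCommGroup V] [Module ℂ V] (φ : V → V → V)
    (hbil : IsBilin ℂ φ) (hcomm : IsComm φ) (hjord : JordanId φ)
    (e : Module.Basis (Fin 4) ℂ V)
    (h00 : φ (e 0) (e 0) = e 1) (h02 : φ (e 0) (e 2) = e 3)
    (h01 : φ (e 0) (e 1) = 0)
    (hcenter : ∀ x : V, (∀ y : V, φ x y = 0) ↔ ∃ c : ℂ, x = c • e 3)
    (a b c : ℂ) (ha : a ≠ 0)
    (h12 : φ (e 1) (e 2) = a • e 3) (h22 : φ (e 2) (e 2) = b • e 1 + c • e 3)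
    (s : ℂ) (hs : s ^ 2 = 1 - b) :
    (s • e 0 + e 2) ∉ lcs ℂ φ 1 ∧
    LinearIndependent ℂ
      ![φ (s • e 0 + e 2) (s • e 0 + e 2),
        φ (s • e 0 + e 2) (φ (s • e 0 + e 2) (s • e 0 + e 2))] := by
  obtain ⟨B, rfl⟩ := hbil.exists_linearMap₂
  beta_reduce at *
  have h3y : ∀ y, B (e 3) y = 0 := (hcenter (e 3)).2 ⟨1, (one_smul ℂ _).symm⟩
  have hy3 : ∀ y, B y (e 3) = 0 := fun y => (hcomm y (e 3)).trans (h3y y)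
  have h10 : B (e 1) (e 0) = 0 := (hcomm _ _).trans h01
  have h20 : B (e 2) (e 0) = e 3 := (hcomm _ _).trans h02
  have h21 : B (e 2) (e 1) = a • e 3 := (hcomm _ _).trans h12
  have h11 : B (e 1) (e 1) = 0 := by
    simpa only [h00] using hjord.sq_mul_sq_eq_zero hcomm (x := e 0) (by rw [h00, h01])
  have hsq : B (s • e 0 + e 2) (s • e 0 + e 2) = e 1 + (2 * s + c) • e 3 := by
    simp only [map_add, map_smul, LinearMap.add_apply, LinearMap.smul_apply, h00, h02, h20, h22]
    match_scalars
    · linear_combination hs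
    · ring
  have hcube : B (s • e 0 + e 2) (e 1 + (2 * s + c) • e 3) = a • e 3 := by
    simp [h01, h21, hy3]
  refine ⟨notMem_lcs_one_of_map_mul_eq_zero (e.coord 2) (fun x y => ?_) (by simp), ?_⟩
  · have htable : B.compr₂ (e.coord 2) = 0 := LinearMap.ext_basis e e fun i j => by
      fin_cases i <;> fin_cases j <;> simp [h00, h01, h02, h10, h11, h12, h20, h21, h22, h3y, hy3]
    exact LinearMap.congr_fun₂ htable x y
  · rw [hsq, hcube]
    exact e.linearIndependent_add_smul_pair (by decide) _ ha

/-- key lemma towards the (2,2) case. Under the stated hypotheses,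
x = √(1−b)·e₁ + e₃ lies outside C²(φ) and x·x, x·(x·x) are linearly independent,
so L_x has a Jordan block of size ≥ 3. -/
theorem char_seq_two_two_center_lemma
    {V : Type*} [AddCommGroup V] [Module ℂ V] (φ : V → V → V)
    (hbil : IsBilin ℂ φ) (hcomm : IsComm φ) (hjord : JordanId φ)
    (hnilp : IsNilp ℂ φ) (e : Module.Basis (Fin 4) ℂ V)
    (h00 : φ (e 0) (e 0) = e 1) (h02 : φ (e 0) (e 2) = e 3)
    (h01 : φ (e 0) (e 1) = 0) (h03 : φ (e 0) (e 3) = 0)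
    (hcenter : ∀ x : V, (∀ y : V, φ x y = 0) ↔ ∃ c : ℂ, x = c • e 3)
    (a b c : ℂ) (ha : a ≠ 0)
    (h12 : φ (e 1) (e 2) = a • e 3) (h22 : φ (e 2) (e 2) = b • e 1 + c • e 3)
    (s : ℂ) (hs : s ^ 2 = 1 - b) :
    (s • e 0 + e 2) ∉ lcs ℂ φ 1 ∧
    LinearIndependent ℂ
      ![φ (s • e 0 + e 2) (s • e 0 + e 2),
        φ (s • e 0 + e 2) (φ (s • e 0 + e 2) (s • e 0 + e 2))] :=
  char_seq_two_two_center_lemma_general φ hbil hcomm hjord e h00 h02 h01 hcenter a b c ha h12 h22 s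
    hs
end

section
/- Every non-Abelian four-dimensional nilpotent complex Jordan algebra whose center has dimension 3 is isomorphic to the algebra with single nonzero product φ(e₁,e₁)=e₂. -/
/-! Since the center `Z` has codimension one, `V = Z ⊕ K e` and the whole product is determined
by `w = φ e e`: `φ (z + a e) (z' + b e) = a b w`. Hence `w ≠ 0` as the algebra is not abelian.
Writing `w = z + a e` gives `φ w w = a² w`, so `a ≠ 0` would put `w` in every term of the lower
central series; by nilpotency `w ∈ Z`. Any basis `e, w, …` with `w, …` spanning `Z` then has
`φ e e = w` as its only nonzero product. -/

open Module Submodule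

section LinearAlgebra

variable {K V : Type*} [Field K] [AddCommGroup V] [Module K V]

theorem exists_basis_fin_apply_zero_eq {n : ℕ} (hV : finrank K V = n + 1) {x : V} (hx : x ≠ 0) :
    ∃ b : Basis (Fin (n + 1)) K V, b 0 = x := by
  have extend : ∀ m ≤ n, ∃ v : Fin (m + 1) → V, LinearIndependent K v ∧ v 0 = x := by
    intro m hm
    induction m with
    | zero => exact ⟨![x], .of_subsingleton (ι := Fin 1) 0 hx, rfl⟩
    | succ m ih =>
      obtain ⟨v, hv, hv0⟩ := ih (by omega)
      obtain ⟨y, hy⟩ := exists_linearIndependent_snoc_of_lt_finrank hv (by omega)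
      exact ⟨Fin.snoc v y, hy, by simpa using hv0⟩
  obtain ⟨v, hv, hv0⟩ := extend n le_rfl
  exact ⟨basisOfLinearIndependentOfCardEqFinrank hv (by simp [hV]), by simpa using hv0⟩

theorem exists_basis_fin_cons_of_notMem {Z : Submodule K V} {n : ℕ} (hZ : finrank K Z = n + 1)
    (hV : finrank K V = n + 2) {e w : V} (he : e ∉ Z) (hw : w ∈ Z) (hw0 : w ≠ 0) :
    ∃ b : Basis (Fin (n + 2)) K V, b 0 = e ∧ b 1 = w ∧ ∀ i : Fin (n + 1), b i.succ ∈ Z := by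
  obtain ⟨bZ, hbZ⟩ := exists_basis_fin_apply_zero_eq hZ (x := ⟨w, hw⟩) (by simpa using hw0)
  have hli : LinearIndependent K (Fin.cons e (Z.subtype ∘ bZ)) := by
    refine linearIndependent_finCons.mpr ⟨bZ.linearIndependent.map' _ Z.ker_subtype, ?_⟩
    refine fun h => he (span_le.mpr ?_ h)
    rintro _ ⟨i, rfl⟩
    exact (bZ i).2
  refine ⟨basisOfLinearIndependentOfCardEqFinrank hli (by simp [hV]), by simp, ?_, by simp⟩
  simpa using congrArg Subtype.val hbZ

theorem exists_eq_add_smul_of_notMem [FiniteDimensional K V] {Z : Submodule K V}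
    (hV : finrank K V = finrank K Z + 1) {e : V} (he : e ∉ Z) (x : V) :
    ∃ z ∈ Z, ∃ a : K, x = z + a • e := by
  have htop : Z ⊔ K ∙ e = ⊤ :=
    eq_top_of_finrank_eq (by rw [finrank_sup_span_singleton he, hV])
  obtain ⟨z, hz, y, hy, hx⟩ := mem_sup.mp (htop ▸ mem_top : x ∈ Z ⊔ K ∙ e)
  obtain ⟨a, rfl⟩ := mem_span_singleton.mp hy
  exact ⟨z, hz, a, hx.symm⟩

end LinearAlgebra

section CodimensionOneCenter

variable {K V : Type*} [Field K] [AddCommGroup V] [Module K V] {φ : V → V → V}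

theorem mem_lcs_of_mul_self_eq_smul {w : V} {c : K} (hc : c ≠ 0) (hw : φ w w = c • w) :
    ∀ k, w ∈ lcs K φ k
  | 0 => mem_top
  | k + 1 => by
    have h : φ w w ∈ lcs K φ (k + 1) :=
      subset_span ⟨w, mem_lcs_of_mul_self_eq_smul hc hw k, w, rfl⟩
    rwa [hw, smul_mem_iff _ hc] at h

theorem IsNilp.eq_zero_of_mul_self_eq_smul (hnilp : IsNilp K φ) {w : V} {c : K} (hc : c ≠ 0)
    (hw : φ w w = c • w) : w = 0 := by
  obtain ⟨k, hk⟩ := hnilp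
  simpa [hk] using mem_lcs_of_mul_self_eq_smul hc hw k

theorem IsBilin.add_smul_mul_of_forall_mul_eq_zero (hbil : IsBilin K φ) {z : V}
    (hz : ∀ y, φ z y = 0) (a : K) (e y : V) : φ (z + a • e) y = a • φ e y := by
  rw [add_comm, hbil.1, hz, add_zero]

theorem IsBilin.add_smul_mul_add_smul (hbil : IsBilin K φ) (hcomm : IsComm φ) {z z' : V}
    (hz : ∀ y, φ z y = 0) (hz' : ∀ y, φ z' y = 0) (a b : K) (e : V) :
    φ (z + a • e) (z' + b • e) = (a * b) • φ e e := by
  rw [hbil.add_smul_mul_of_forall_mul_eq_zero hz, hcomm e,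
    hbil.add_smul_mul_of_forall_mul_eq_zero hz', hcomm, smul_smul]

theorem mul_self_mem_of_isNilp (hbil : IsBilin K φ) (hcomm : IsComm φ) {Z : Submodule K V}
    (hZ : ∀ z ∈ Z, ∀ y, φ z y = 0) {e : V} (hspan : ∀ x, ∃ z ∈ Z, ∃ a : K, x = z + a • e)
    (hnilp : IsNilp K φ) : φ e e ∈ Z := by
  obtain ⟨z, hz, a, hw⟩ := hspan (φ e e)
  rcases eq_or_ne a 0 with rfl | ha
  · simpa [hw] using hz
  · have hww : φ (φ e e) (φ e e) = (a * a) • φ e e := by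
      rw [hw, hbil.add_smul_mul_add_smul hcomm (hZ z hz) (hZ z hz), ← hw]
    simp [hnilp.eq_zero_of_mul_self_eq_smul (mul_ne_zero ha ha) hww, zero_mem]

theorem mul_self_ne_zero_of_exists_mul_ne_zero (hbil : IsBilin K φ) (hcomm : IsComm φ)
    {Z : Submodule K V} (hZ : ∀ z ∈ Z, ∀ y, φ z y = 0) {e : V}
    (hspan : ∀ x, ∃ z ∈ Z, ∃ a : K, x = z + a • e) (hnonab : ∃ x y, φ x y ≠ 0) : φ e e ≠ 0 := by
  obtain ⟨x, y, hxy⟩ := hnonab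
  obtain ⟨z, hz, a, rfl⟩ := hspan x
  obtain ⟨z', hz', b, rfl⟩ := hspan y
  rw [hbil.add_smul_mul_add_smul hcomm (hZ z hz) (hZ z' hz')] at hxy
  exact right_ne_zero_of_smul hxy

end CodimensionOneCenter

theorem dim_four_center_three_classification_general
    {V : Type*} [AddCommGroup V] [Module ℂ V] (φ : V → V → V)
    (hbil : IsBilin ℂ φ) (hcomm : IsComm φ)
    (hnilp : IsNilp ℂ φ) (hdim : Module.finrank ℂ V = 4)
    (hnonab : ∃ x y : V, φ x y ≠ 0)
    (Z : Submodule ℂ V) (hZ : ∀ x : V, x ∈ Z ↔ ∀ y : V, φ x y = 0)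
    (hZdim : Module.finrank ℂ Z = 3) :
    ∃ e : Module.Basis (Fin 4) ℂ V, φ (e 0) (e 0) = e 1 ∧
      ∀ i j : Fin 4, (i, j) ≠ (0, 0) → φ (e i) (e j) = 0 := by
  have : FiniteDimensional ℂ V := .of_finrank_pos (by omega)
  have hcentral : ∀ z ∈ Z, ∀ y, φ z y = 0 := fun z => (hZ z).1
  obtain ⟨e, -, he⟩ := SetLike.exists_of_lt (lt_top_of_finrank_lt_finrank (by omega) : Z < ⊤)
  have hspan := exists_eq_add_smul_of_notMem (by omega) he
  obtain ⟨b, hb0, hb1, hbZ⟩ := exists_basis_fin_cons_of_notMem hZdim hdim he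
    (mul_self_mem_of_isNilp hbil hcomm hcentral hspan hnilp)
    (mul_self_ne_zero_of_exists_mul_ne_zero hbil hcomm hcentral hspan hnonab)
  refine ⟨b, by rw [hb0, ← hb1], fun i j hij => ?_⟩
  cases i using Fin.cases with
  | zero =>
    cases j using Fin.cases with
    | zero => exact absurd rfl hij
    | succ j => rw [hcomm]; exact hcentral _ (hbZ j) _
  | succ i => exact hcentral _ (hbZ i) _

/-- every non-Abelian 4-dimensional nilpotent complex Jordan algebra
with 3-dimensional center is isomorphic to the algebra with single nonzero product
φ(e₁,e₁)=e₂. -/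
theorem dim_four_center_three_classification
    {V : Type*} [AddCommGroup V] [Module ℂ V] (φ : V → V → V)
    (hbil : IsBilin ℂ φ) (hcomm : IsComm φ) (hjord : JordanId φ)
    (hnilp : IsNilp ℂ φ) (hdim : Module.finrank ℂ V = 4)
    (hnonab : ∃ x y : V, φ x y ≠ 0)
    (Z : Submodule ℂ V) (hZ : ∀ x : V, x ∈ Z ↔ ∀ y : V, φ x y = 0)
    (hZdim : Module.finrank ℂ Z = 3) :
    ∃ e : Module.Basis (Fin 4) ℂ V, φ (e 0) (e 0) = e 1 ∧
      ∀ i j : Fin 4, (i, j) ≠ (0, 0) → φ (e i) (e j) = 0 :=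
  dim_four_center_three_classification_general φ hbil hcomm hnilp hdim hnonab Z hZ hZdim
end
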